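/- arXiv:math/9308218 — 2 statements merged into one kernel-verified Lean document; each statement's English description precedes it below -/
import Mathlib

section
/- Let S ⊆ lim(ω₁) and let T be a tree that is S-properly pruned in countable products. Let C = {F_s : s ∈ 2^{<ω}} ⊆ T^ω be a separated and uniformly cofinal Cantor tree in (T↾δ)^ω for some δ ∈ S. Then there are uncountably many f ∈ 2^ω such that for every i in ⋃_{n∈ω} supt(F_{f↾n}), the union ⋃_{n∈ω} F_{f↾n}(i) belongs to T_δ. -/
open Set

/-- A (partial) node of the tree `2^{<ω₁}`: a set of ordinal–bit pairs,
    thought of as the graph of a partial function from ω₁ to `Bool`. -/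
abbrev PNode : Type 1 := Set (Ordinal × Bool)

/-- The first uncountable ordinal ω₁. -/
noncomputable def omega1 : Ordinal := (Cardinal.aleph 1).ord

/-- `s` is (the graph of) a partial function. -/
def IsFunl (s : PNode) : Prop :=
  ∀ ⦃o : Ordinal⦄ ⦃b b' : Bool⦄, (o, b) ∈ s → (o, b') ∈ s → b = b'

/-- Domain of a partial node. -/
def ndom (s : PNode) : Set Ordinal := {o | ∃ b, (o, b) ∈ s}

/-- An element of `2^{<ω₁}`: a function from a countable ordinal to `Bool`. -/
def IsNode (s : PNode) : Prop :=
  IsFunl s ∧ ∃ δ : Ordinal, δ < omega1 ∧ ndom s = Set.Iio δ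

/-- Height (= length = domain) of a node. -/
noncomputable def ht (s : PNode) : Ordinal := sInf {δ : Ordinal | ndom s = Set.Iio δ}

/-- Two nodes are compatible iff their union is (the graph of) a function,
    i.e. they have a common extension in `2^{<ω₁}`. -/
def Compat (s t : PNode) : Prop := IsFunl (s ∪ t)

/-- Restriction of a node below `β`. -/
def restrictNode (s : PNode) (β : Ordinal) : PNode := {p ∈ s | p.1 < β}

/-- A tree: a set of nodes of `2^{<ω₁}` containing the root `∅` and closed
    under restriction (initial segments), ordered by inclusion. -/
def IsTree (T : Set PNode) : Prop :=
  (∀ t ∈ T, IsNode t) ∧ (∅ : PNode) ∈ T ∧ ∀ t ∈ T, ∀ β : Ordinal, restrictNode t β ∈ T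

/-- The δ-th level `T_δ` of a tree. -/
def level (T : Set PNode) (δ : Ordinal) : Set PNode := {t ∈ T | ndom t = Set.Iio δ}

/-- `T↾δ`, the part of the tree of height `< δ`. -/
def restrictTree (T : Set PNode) (δ : Ordinal) : Set PNode := {t ∈ T | ht t < δ}

/-- A branch: a linearly ordered subset meeting every nonempty level. -/
def IsBranch (B T : Set PNode) : Prop :=
  B ⊆ T ∧ IsChain (· ⊆ ·) B ∧
    ∀ δ : Ordinal, (level T δ).Nonempty → (B ∩ level T δ).Nonempty

/-- An ω₁-tree: cardinality ω₁ and height ω₁. -/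
def IsOmega1Tree (T : Set PNode) : Prop :=
  IsTree T ∧ Cardinal.mk T = Cardinal.aleph 1 ∧ ∀ δ < omega1, (level T δ).Nonempty

/-- A normal tree: every node has at least two immediate successors and
    extensions to every higher level below ω₁. -/
def IsNormalTree (T : Set PNode) : Prop :=
  (∀ t ∈ T, ∃ s₁ ∈ T, ∃ s₂ ∈ T, t ⊆ s₁ ∧ t ⊆ s₂ ∧ s₁ ≠ s₂ ∧
      ndom s₁ = Set.Iio (ht t + 1) ∧ ndom s₂ = Set.Iio (ht t + 1)) ∧
  (∀ t ∈ T, ∀ δ : Ordinal, ht t < δ → δ < omega1 → ∃ t' ∈ level T δ, t ⊆ t')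

/-- Support of a tuple `F ∈ T^I`. -/
def supt {I : Type*} (F : I → PNode) : Set I := {i | F i ≠ ∅}

/-- `F ∈ T^I` (every coordinate a node of `T`; `∅` is the root of `T`). -/
def Tuple {I : Type*} (T : Set PNode) (F : I → PNode) : Prop := ∀ i, F i ∈ T

/-- The pointwise order `F ≼ G` on `T^I`. -/
def Tle {I : Type*} (F G : I → PNode) : Prop := ∀ i, F i ⊆ G i

/-- `f↾n` for `f ∈ 2^ω`: the first `n` values of `f`, as an element of `2^{<ω}`. -/
def restr (f : ℕ → Bool) (n : ℕ) : List Bool := List.ofFn fun k : Fin n => f k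

/-- Incomparability in `2^{<ω}`. -/
def ListIncomp (s t : List Bool) : Prop := ¬ s <+: t ∧ ¬ t <+: s

/-- `F` and `G` are completely incompatible. -/
def CompIncompat {I J : Type*} (F : I → PNode) (G : J → PNode) : Prop :=
  ∀ i ∈ supt F, ∀ j ∈ supt G, ¬ Compat (F i) (G j)

/-- A Cantor tree `{F_s : s ∈ 2^{<ω}}` of tuples: `s ⊆ t` iff `F_s ≼ F_t`. -/
def IsCantorSystem {I : Type*} (F : List Bool → I → PNode) : Prop :=
  ∀ s t : List Bool, (s <+: t ↔ Tle (F s) (F t))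

/-- Separated: incomparable indices yield completely incompatible tuples. -/
def Separated {I : Type*} (F : List Bool → I → PNode) : Prop :=
  ∀ s t : List Bool, ListIncomp s t → CompIncompat (F s) (F t)

/-- `F` is uniform at `δ`: every coordinate in the support has height `δ`. -/
def UniformAt {I : Type*} (F : I → PNode) (δ : Ordinal) : Prop :=
  ∀ i ∈ supt F, ndom (F i) = Set.Iio δ

/-- The Cantor tree `{F_s}` is uniformly cofinal in `(T↾δ)^I`. -/
def UnifCofinal {I : Type*} (F : List Bool → I → PNode) (δ : Ordinal) : Prop :=
  (∀ s : List Bool, ∃ δs < δ, UniformAt (F s) δs) ∧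
  ∀ i ∈ ⋃ s : List Bool, supt (F s), ∀ f : ℕ → Bool,
    (∀ n, i ∈ supt (F (restr f n))) → ∀ β < δ, ∃ n, β ≤ ht (F (restr f n) i)

/-- `T` is properly pruned in countable products at level `δ`. -/
def PrunedInProductsAt (T : Set PNode) (δ : Ordinal) : Prop :=
  ∀ F : List Bool → ℕ → PNode, (∀ s, Tuple T (F s)) → IsCantorSystem F →
    Separated F → UnifCofinal F δ →
    ∃ f g : ℕ → Bool,
      (∀ i ∈ ⋃ n : ℕ, supt (F (restr f n)), (⋃ n : ℕ, F (restr f n) i) ∈ level T δ) ∧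
      (∀ i ∈ ⋃ n : ℕ, supt (F (restr g n)), (⋃ n : ℕ, F (restr g n) i) ∉ level T δ)

/-- `T` is complete at level `δ`: every branch of `T↾δ` has its union in `T_δ`. -/
def CompleteAt (T : Set PNode) (δ : Ordinal) : Prop :=
  ∀ B : Set PNode, IsBranch B (restrictTree T δ) → ⋃₀ B ∈ level T δ

/-- `T` is `S`-properly pruned in countable products. -/
def SPrunedInProducts (T : Set PNode) (S : Set Ordinal) : Prop :=
  ∀ δ < omega1, Order.IsSuccLimit δ →
    (δ ∉ S → CompleteAt T δ) ∧ (δ ∈ S → PrunedInProductsAt T δ)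

/-- A Cantor subtree `{c_s : s ∈ 2^{<ω}}` of `T`. -/
def IsCantorSubtree (T : Set PNode) (c : List Bool → PNode) : Prop :=
  (∀ s, c s ∈ T) ∧ ∀ s t : List Bool, s <+: t ↔ c s ⊆ c t

/-- A Cantor subtree of `T` is cofinal in `T↾δ`. -/
def CofinalIn (c : List Bool → PNode) (δ : Ordinal) : Prop :=
  ∀ f : ℕ → Bool, ∀ β < δ, ∃ n : ℕ, β ≤ ht (c (restr f n))

/-- `T` is properly pruned at level `δ`. -/
def PrunedAt (T : Set PNode) (δ : Ordinal) : Prop :=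
  ∀ c : List Bool → PNode, IsCantorSubtree T c → CofinalIn c δ →
    ∃ f g : ℕ → Bool,
      (⋃ n : ℕ, c (restr f n)) ∈ level T δ ∧ (⋃ n : ℕ, c (restr g n)) ∉ level T δ

/-- `T` is `S`-properly pruned. -/
def SPruned (T : Set PNode) (S : Set Ordinal) : Prop :=
  ∀ δ < omega1, Order.IsSuccLimit δ → (δ ∉ S → CompleteAt T δ) ∧ (δ ∈ S → PrunedAt T δ)

/-- The forcing poset `ℙ(T, I, ω₁)`: members of `T^I` with countable support. -/
def Cond (T : Set PNode) (I : Type*) :=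
  {F : I → PNode // (∀ i, F i ∈ T) ∧ (supt F).Countable}

/-- The order of `ℙ(T, I, ω₁)`: `p ≤ q` iff `q ≼ p` pointwise. -/
def condLE {T : Set PNode} {I : Type*} (p q : Cond T I) : Prop := ∀ i, q.1 i ⊆ p.1 i

/-!
If only countably many branches `a₀, a₁, …` of `C` landed in `T_δ`, interleave every
`f ∈ 2^ω` with the diagonal bits `dₖ = ¬ aₖ(2k+1)`. Then `s ↦ F_{interleaveList d s}` is a
Cantor subtree of `C`, hence again separated and uniformly cofinal, and its branch along `f`
is a cofinal part of the branch of `C` along `interleave d f`, which differs from every `aₖ`.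
Pruning in countable products provides a branch of the subtree landing in `T_δ`: contradiction.
-/

@[simp]
lemma restr_length (f : ℕ → Bool) (n : ℕ) : (restr f n).length = n := List.length_ofFn

@[simp]
lemma getElem_restr (f : ℕ → Bool) {n k : ℕ} (hk : k < (restr f n).length) :
    (restr f n)[k] = f k := by
  simp [restr]

lemma restr_prefix_restr_iff {f g : ℕ → Bool} {n m : ℕ} :
    restr f n <+: restr g m ↔ n ≤ m ∧ ∀ k < n, f k = g k := by
  rw [List.prefix_iff_getElem]
  simp

lemma restr_prefix_restr (f : ℕ → Bool) {n m : ℕ} (h : n ≤ m) : restr f n <+: restr f m :=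
  restr_prefix_restr_iff.2 ⟨h, fun _ _ => rfl⟩

lemma restr_congr {f g : ℕ → Bool} {n : ℕ} (h : ∀ k < n, f k = g k) : restr f n = restr g n :=
  List.ofFn_inj.2 <| funext fun k => h k k.2

lemma restr_getD_length (s : List Bool) : restr (s.getD · false) s.length = s :=
  List.ext_getElem (by simp) fun k _ hk => by rw [getElem_restr, List.getD_eq_getElem _ _ hk]

lemma getD_restr (f : ℕ → Bool) {n k : ℕ} (hk : k < n) : (restr f n).getD k false = f k := by
  rw [List.getD_eq_getElem _ _ (by simpa using hk), getElem_restr]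

def interleave (d f : ℕ → Bool) (j : ℕ) : Bool := if j % 2 = 0 then f (j / 2) else d (j / 2)

@[simp]
lemma interleave_two_mul (d f : ℕ → Bool) (k : ℕ) : interleave d f (2 * k) = f k := by
  simp [interleave]

@[simp]
lemma interleave_two_mul_add_one (d f : ℕ → Bool) (k : ℕ) :
    interleave d f (2 * k + 1) = d k := by
  simp [interleave, Nat.add_mod, Nat.add_div]

lemma interleave_eq_interleave_iff {d f g : ℕ → Bool} {n : ℕ} :
    (∀ j < 2 * n, interleave d f j = interleave d g j) ↔ ∀ k < n, f k = g k := by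
  refine ⟨fun h k hk => by simpa using h (2 * k) (by omega), fun h j hj => ?_⟩
  obtain ⟨k, rfl | rfl⟩ := Nat.even_or_odd' j
  · simpa using h k (by omega)
  · simp

-- The `false` default is never read: only the first `2 * s.length` bits are kept.
def interleaveList (d : ℕ → Bool) (s : List Bool) : List Bool :=
  restr (interleave d (s.getD · false)) (2 * s.length)

lemma interleaveList_prefix_iff (d : ℕ → Bool) {s t : List Bool} :
    interleaveList d s <+: interleaveList d t ↔ s <+: t := by
  conv_rhs => rw [← restr_getD_length s, ← restr_getD_length t]
  rw [interleaveList, interleaveList, restr_prefix_restr_iff, restr_prefix_restr_iff,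
    interleave_eq_interleave_iff, Nat.mul_le_mul_left_iff two_pos]

lemma interleaveList_restr (d f : ℕ → Bool) (n : ℕ) :
    interleaveList d (restr f n) = restr (interleave d f) (2 * n) := by
  rw [interleaveList, restr_length]
  exact restr_congr (interleave_eq_interleave_iff.2 fun k hk => getD_restr f hk)

lemma exists_interleave_notMem {A : Set (ℕ → Bool)} (hA : A.Countable) :
    ∃ d, ∀ f, interleave d f ∉ A := by
  obtain ⟨a, ha⟩ := Set.countable_iff_exists_subset_range.1 hA
  refine ⟨fun k => !a k (2 * k + 1), fun f hf => ?_⟩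
  obtain ⟨k, hk⟩ := ha hf
  simpa using congrFun hk (2 * k + 1)

lemma ht_eq_of_ndom_eq {s : PNode} {α : Ordinal} (h : ndom s = Set.Iio α) : ht s = α := by
  have hα : {β : Ordinal | ndom s = Set.Iio β} = {α} := by
    ext β
    simp [h, Set.Iio_inj, eq_comm]
  rw [ht, hα, csInf_singleton]

lemma ht_le_ht_of_subset {s t : PNode} {α β : Ordinal} (hs : ndom s = Set.Iio α)
    (ht' : ndom t = Set.Iio β) (hst : s ⊆ t) : ht s ≤ ht t := by
  rw [ht_eq_of_ndom_eq hs, ht_eq_of_ndom_eq ht', ← Set.Iio_subset_Iio_iff, ← hs, ← ht']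
  rintro o ⟨b, hb⟩
  exact ⟨b, hst hb⟩

def LandsIn (T : Set PNode) (δ : Ordinal) (F : List Bool → ℕ → PNode) (f : ℕ → Bool) : Prop :=
  ∀ i ∈ ⋃ n : ℕ, supt (F (restr f n)), (⋃ n : ℕ, F (restr f n) i) ∈ level T δ

section CantorSystem

variable {I : Type*} {F : List Bool → I → PNode}

lemma IsCantorSystem.supt_mono (hF : IsCantorSystem F) {s t : List Bool} (hst : s <+: t) :
    supt (F s) ⊆ supt (F t) :=
  fun i hi hempty => hi (Set.subset_empty_iff.1 (hempty ▸ (hF s t).1 hst i))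

lemma IsCantorSystem.monotone_restr (hF : IsCantorSystem F) (f : ℕ → Bool) (i : I) :
    Monotone fun n => F (restr f n) i :=
  fun _ _ hnm => (hF _ _).1 (restr_prefix_restr f hnm) i

lemma IsCantorSystem.monotone_supt_restr (hF : IsCantorSystem F) (f : ℕ → Bool) :
    Monotone fun n => supt (F (restr f n)) :=
  fun _ _ hnm => hF.supt_mono (restr_prefix_restr f hnm)

lemma IsCantorSystem.comp (hF : IsCantorSystem F) {e : List Bool → List Bool}
    (he : ∀ s t, e s <+: e t ↔ s <+: t) : IsCantorSystem fun s => F (e s) :=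
  fun s t => (he s t).symm.trans (hF (e s) (e t))

lemma Separated.comp (hF : Separated F) {e : List Bool → List Bool}
    (he : ∀ s t, e s <+: e t ↔ s <+: t) : Separated fun s => F (e s) :=
  fun s t hst => hF (e s) (e t) ⟨mt (he s t).1 hst.1, mt (he t s).1 hst.2⟩

lemma UnifCofinal.ht_le_of_prefix {δ : Ordinal} (hCof : UnifCofinal F δ)
    (hF : IsCantorSystem F) {s t : List Bool} (hst : s <+: t) {i : I} (hi : i ∈ supt (F s)) :
    ht (F s i) ≤ ht (F t i) := by
  obtain ⟨_, -, hs⟩ := hCof.1 s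
  obtain ⟨_, -, ht'⟩ := hCof.1 t
  exact ht_le_ht_of_subset (hs i hi) (ht' i (hF.supt_mono hst hi)) ((hF s t).1 hst i)

lemma UnifCofinal.comp_interleaveList {δ : Ordinal} (hCof : UnifCofinal F δ)
    (hF : IsCantorSystem F) (d : ℕ → Bool) : UnifCofinal (fun s => F (interleaveList d s)) δ := by
  refine ⟨fun s => hCof.1 _, fun i _ f hf β hβ => ?_⟩
  simp only [interleaveList_restr] at hf
  have hsupt : ∀ m, i ∈ supt (F (restr (interleave d f) m)) :=
    fun m => hF.supt_mono (restr_prefix_restr _ (by omega)) (hf 0)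
  obtain ⟨m, hm⟩ := hCof.2 i (Set.mem_iUnion.2 ⟨_, hf 0⟩) _ hsupt β hβ
  refine ⟨m, hm.trans ?_⟩
  dsimp only
  rw [interleaveList_restr]
  exact hCof.ht_le_of_prefix hF (restr_prefix_restr _ (by omega)) (hsupt m)

end CantorSystem

lemma landsIn_comp_iff {T : Set PNode} {δ : Ordinal} {F : List Bool → ℕ → PNode}
    (hF : IsCantorSystem F) {e : List Bool → List Bool} {f g : ℕ → Bool} {ℓ : ℕ → ℕ}
    (hℓ : Filter.Tendsto ℓ .atTop .atTop) (h : ∀ n, e (restr f n) = restr g (ℓ n)) :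
    LandsIn T δ (fun s => F (e s)) f ↔ LandsIn T δ F g := by
  simp only [LandsIn, h, (hF.monotone_supt_restr g).iUnion_comp_tendsto_atTop hℓ,
    fun i => (hF.monotone_restr g i).iUnion_comp_tendsto_atTop hℓ]

theorem uncountably_many_branches_land_in_level_general
    (T : Set PNode) (S : Set Ordinal)
    (hPr : SPrunedInProducts T S)
    (δ : Ordinal) (hδS : δ ∈ S) (hδ : δ < omega1) (hlim : Order.IsSuccLimit δ)
    (F : List Bool → ℕ → PNode) (hTup : ∀ s, Tuple T (F s))
    (hCantor : IsCantorSystem F) (hSep : Separated F) (hCof : UnifCofinal F δ) :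
    ¬ Set.Countable {f : ℕ → Bool |
        ∀ i ∈ ⋃ n : ℕ, supt (F (restr f n)),
          (⋃ n : ℕ, F (restr f n) i) ∈ level T δ} := by
  intro hA
  obtain ⟨d, hd⟩ := exists_interleave_notMem hA
  obtain ⟨f, -, hf, -⟩ := (hPr δ hδ hlim).2 hδS (fun s => F (interleaveList d s))
    (fun s => hTup _) (hCantor.comp fun _ _ => interleaveList_prefix_iff d)
    (hSep.comp fun _ _ => interleaveList_prefix_iff d) (hCof.comp_interleaveList hCantor d)
  have hℓ : Filter.Tendsto (2 * ·) .atTop .atTop := Filter.tendsto_id.const_mul_atTop' two_pos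
  exact hd f ((landsIn_comp_iff hCantor hℓ (interleaveList_restr d f)).1 hf)

/-- **Lemma 4.** Let `T` be `S`-properly pruned in countable products and let
`C = {F_s : s ∈ 2^{<ω}} ⊆ T^ω` be a separated, uniformly cofinal Cantor tree in
`(T↾δ)^ω` for some `δ ∈ S`. Then there are uncountably many `f ∈ 2^ω` such that all
the coordinatewise unions `⋃ₙ F_{f↾n}(i)` (for `i` in the union of supports) lie
in `T_δ`. -/
theorem uncountably_many_branches_land_in_level
    (T : Set PNode) (hT : IsTree T) (S : Set Ordinal)
    (hPr : SPrunedInProducts T S)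
    (δ : Ordinal) (hδS : δ ∈ S) (hδ : δ < omega1) (hlim : Order.IsSuccLimit δ)
    (F : List Bool → ℕ → PNode) (hTup : ∀ s, Tuple T (F s))
    (hCantor : IsCantorSystem F) (hSep : Separated F) (hCof : UnifCofinal F δ) :
    ¬ Set.Countable {f : ℕ → Bool |
        ∀ i ∈ ⋃ n : ℕ, supt (F (restr f n)),
          (⋃ n : ℕ, F (restr f n) i) ∈ level T δ} :=
  uncountably_many_branches_land_in_level_general T S hPr δ hδS hδ hlim F hTup hCantor hSep hCof
end

section
/- Suppose ℙ and ℚ are forcing posets over M, ℙ is ω₁-Baire in M, and ℚ is ω₁-closed in M. Let G × H be ℙ × ℚ-generic over M. Then M^ω ∩ M[G × H] ⊆ M; i.e., the product forcing adds no new countable sequences of ground-model elements. -/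
open Set

/-! Abstract forcing posets. `le p q` means "`p` extends (is stronger than) `q`". -/

section Poset

variable {P : Type*} (le : P → P → Prop)

/-- `D` is dense: every condition has an extension in `D`. -/
def DenseBelow (D : Set P) : Prop := ∀ p : P, ∃ d ∈ D, le d p

/-- `D` is open: downward closed under the forcing order. -/
def OpenBelow (D : Set P) : Prop := ∀ p d, d ∈ D → le p d → p ∈ D

/-- `P` is ω₁-Baire: countable intersections of dense open sets are dense. -/
def Omega1Baire : Prop :=
  ∀ D : ℕ → Set P, (∀ n, DenseBelow le (D n) ∧ OpenBelow le (D n)) →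
    DenseBelow le (⋂ n, D n)

/-- `P` is ω₁-closed: every countable descending chain has a lower bound. -/
def Omega1Closed : Prop :=
  ∀ c : ℕ → P, (∀ n, le (c (n + 1)) (c n)) → ∃ q : P, ∀ n, le q (c n)

end Poset


/-!
Well-order `Q`. Given dense open sets `D k ⊆ P × Q`, say that `p` pins `q` below `q'` in
`D k` when `q` is the well-order-least `x ≤ q'` that some extension of `p` pairs into `D k`,
and `p` itself pairs it. Pinning is inherited by extensions of `p` and pins at most one `q`,
so the conditions pinning the first `n` steps of a chain starting at `q₀` form dense open
sets in `P`. A condition `p` in all of them (`P` is ω₁-Baire) pins an entire descending chain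
in `Q`, and a lower bound `q` of that chain (`Q` is ω₁-closed) gives `(p, q) ∈ ⋂ k, D k`.
-/

theorem exists_seq_of_forall_exists_finite_seq {α : Type*} {R : ℕ → α → α → Prop}
    (hR : ∀ k a b b', R k a b → R k a b' → b = b') (a₀ : α)
    (h : ∀ n, ∃ c : ℕ → α, c 0 = a₀ ∧ ∀ k < n, R k (c k) (c (k + 1))) :
    ∃ e : ℕ → α, e 0 = a₀ ∧ ∀ k, R k (e k) (e (k + 1)) := by
  choose c hc0 hc using h
  have agree : ∀ k m n, k ≤ m → k ≤ n → c m k = c n k := by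
    intro k
    induction k with
    | zero => intro m n _ _; rw [hc0 m, hc0 n]
    | succ k ih =>
      intro m n hm hn
      have hm' := hc m k (by omega)
      rw [ih m n (by omega) (by omega)] at hm'
      exact hR k _ _ _ hm' (hc n k (by omega))
  refine ⟨fun k => c (k + 1) k, hc0 1, fun k => ?_⟩
  have hk := hc (k + 1) k (by omega)
  rwa [agree (k + 1) (k + 1) (k + 2) le_rfl (by omega)] at hk

section PinningStep

variable {P Q : Type*} {leP : P → P → Prop} {leQ : Q → Q → Prop}

def prodLE (leP : P → P → Prop) (leQ : Q → Q → Prop) (x y : P × Q) : Prop :=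
  leP x.1 y.1 ∧ leQ x.2 y.2

def Pins (leP : P → P → Prop) (leQ : Q → Q → Prop) (D : Set (P × Q)) (p : P) (q' q : Q) :
    Prop :=
  leQ q q' ∧ (p, q) ∈ D ∧
    ∀ p₁, leP p₁ p → ∀ x, leQ x q' → (p₁, x) ∈ D → ¬ WellOrderingRel x q

variable {D : Set (P × Q)} {p p₁ : P} {q' q q₁ q₂ : Q}

theorem Pins.mono (htransP : ∀ p q r, leP p q → leP q r → leP p r) (hreflQ : ∀ q, leQ q q)
    (hD : OpenBelow (prodLE leP leQ) D) (hp : leP p₁ p) (h : Pins leP leQ D p q' q) :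
    Pins leP leQ D p₁ q' q :=
  ⟨h.1, hD (p₁, q) (p, q) h.2.1 ⟨hp, hreflQ q⟩,
    fun p₂ hp₂ => h.2.2 p₂ (htransP p₂ p₁ p hp₂ hp)⟩

theorem Pins.unique (hreflP : ∀ p, leP p p) (h₁ : Pins leP leQ D p q' q₁)
    (h₂ : Pins leP leQ D p q' q₂) : q₁ = q₂ := by
  rcases trichotomous_of WellOrderingRel q₁ q₂ with hlt | heq | hgt
  · exact absurd hlt (h₂.2.2 p (hreflP p) q₁ h₁.1 h₁.2.1)
  · exact heq
  · exact absurd hgt (h₁.2.2 p (hreflP p) q₂ h₂.1 h₂.2.1)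

theorem exists_pins (htransP : ∀ p q r, leP p q → leP q r → leP p r)
    (hD : DenseBelow (prodLE leP leQ) D) (p : P) (q' : Q) :
    ∃ p₁, leP p₁ p ∧ ∃ q, Pins leP leQ D p₁ q' q := by
  let V : Set Q := {x | leQ x q' ∧ ∃ p₁, leP p₁ p ∧ (p₁, x) ∈ D}
  obtain ⟨d, hdD, hdp, hdq⟩ := hD (p, q')
  have hV : V.Nonempty := ⟨d.2, hdq, d.1, hdp, hdD⟩
  have hwf : WellFounded (WellOrderingRel : Q → Q → Prop) := IsWellFounded.wf
  obtain ⟨hle, p₁, hp₁, hD₁⟩ := hwf.min_mem V hV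
  exact ⟨p₁, hp₁, hwf.min V hV, hle, hD₁, fun p₂ hp₂ x hx hxD =>
    hwf.not_lt_min V ⟨hx, p₂, htransP p₂ p₁ p hp₂ hp₁, hxD⟩⟩

def pinsChain (leP : P → P → Prop) (leQ : Q → Q → Prop) (D : ℕ → Set (P × Q)) (q₀ : Q)
    (n : ℕ) : Set P :=
  {p | ∃ c : ℕ → Q, c 0 = q₀ ∧ ∀ k < n, Pins leP leQ (D k) p (c k) (c (k + 1))}

variable {D : ℕ → Set (P × Q)} {q₀ : Q}

theorem openBelow_pinsChain (htransP : ∀ p q r, leP p q → leP q r → leP p r)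
    (hreflQ : ∀ q, leQ q q) (hD : ∀ k, OpenBelow (prodLE leP leQ) (D k)) (n : ℕ) :
    OpenBelow leP (pinsChain leP leQ D q₀ n) := by
  rintro p₁ p ⟨c, hc0, hc⟩ hp
  exact ⟨c, hc0, fun k hk => (hc k hk).mono htransP hreflQ (hD k) hp⟩

theorem denseBelow_pinsChain (hreflP : ∀ p, leP p p)
    (htransP : ∀ p q r, leP p q → leP q r → leP p r) (hreflQ : ∀ q, leQ q q)
    (hD : ∀ k, DenseBelow (prodLE leP leQ) (D k) ∧ OpenBelow (prodLE leP leQ) (D k))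
    (n : ℕ) : DenseBelow leP (pinsChain leP leQ D q₀ n) := by
  induction n with
  | zero => exact fun p => ⟨p, ⟨fun _ => q₀, rfl, fun k hk => absurd hk k.not_lt_zero⟩, hreflP p⟩
  | succ n ih =>
    intro p
    obtain ⟨p₁, ⟨c, hc0, hc⟩, hp₁⟩ := ih p
    obtain ⟨p₂, hp₂, q, hq⟩ := exists_pins htransP (hD n).1 p₁ (c n)
    refine ⟨p₂, ⟨Function.update c (n + 1) q, ?_, fun k hk => ?_⟩, htransP p₂ p₁ p hp₂ hp₁⟩
    · rwa [Function.update_of_ne (by omega)]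
    · rcases Nat.lt_succ_iff_lt_or_eq.mp hk with hk | rfl
      · rw [Function.update_of_ne (by omega), Function.update_of_ne (by omega)]
        exact (hc k hk).mono htransP hreflQ (hD k).2 hp₂
      · rwa [Function.update_self, Function.update_of_ne (by omega)]

end PinningStep

/-- `ℙ × ℚ` being ω₁-Baire is the combinatorial form of `M^ω ∩ M[G × H] ⊆ M`. -/
theorem product_baire_closed_no_new_sequences_general
    {P Q : Type*} (leP : P → P → Prop) (leQ : Q → Q → Prop)
    (hreflP : ∀ p, leP p p) (htransP : ∀ p q r, leP p q → leP q r → leP p r)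
    (hreflQ : ∀ p, leQ p p)
    (hP : Omega1Baire leP) (hQ : Omega1Closed leQ) :
    Omega1Baire (fun x y : P × Q => leP x.1 y.1 ∧ leQ x.2 y.2) := by
  rintro D hD ⟨p₀, q₀⟩
  obtain ⟨p, hp, hpp₀⟩ := hP (pinsChain leP leQ D q₀) (fun n =>
    ⟨denseBelow_pinsChain hreflP htransP hreflQ hD n,
      openBelow_pinsChain htransP hreflQ (fun k => (hD k).2) n⟩) p₀
  obtain ⟨e, he0, he⟩ := exists_seq_of_forall_exists_finite_seq
    (fun _ _ _ _ h₁ h₂ => h₁.unique hreflP h₂) q₀ (mem_iInter.mp hp)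
  obtain ⟨q, hq⟩ := hQ e fun k => (he k).1
  exact ⟨(p, q), mem_iInter.mpr fun n => (hD n).2 _ _ (he n).2.1 ⟨hreflP p, hq (n + 1)⟩,
    hpp₀, he0 ▸ hq 0⟩

/-- **Claim 8.1 (argument pattern).** If `ℙ` is ω₁-Baire in `M` and `ℚ` is ω₁-closed in
`M`, then forcing with `ℙ × ℚ` adds no new countable sequences of ground-model
elements: `M^ω ∩ M[G × H] ⊆ M`. Combinatorially, the product poset `ℙ × ℚ` is
ω₁-Baire (ω-distributive), which is exactly the statement that it adds no new
ω-sequences. -/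
theorem product_baire_closed_no_new_sequences
    {P Q : Type*} (leP : P → P → Prop) (leQ : Q → Q → Prop)
    (hreflP : ∀ p, leP p p) (htransP : ∀ p q r, leP p q → leP q r → leP p r)
    (hreflQ : ∀ p, leQ p p) (htransQ : ∀ p q r, leQ p q → leQ q r → leQ p r)
    (hP : Omega1Baire leP) (hQ : Omega1Closed leQ) :
    Omega1Baire (fun x y : P × Q => leP x.1 y.1 ∧ leQ x.2 y.2) :=
  product_baire_closed_no_new_sequences_general leP leQ hreflP htransP hreflQ hP hQ
end
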